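/- arXiv:1503.04753 — 2 statements merged into one kernel-verified Lean document; each statement's English description precedes it below -/
import Mathlib

section
/- Let G = (V,E,c) be an edge-weighted directed graph without negative-weight closed walks, and suppose i, j, s all lie in the same equivalence class of the relation ∼. Then d_{ij} = d_{is} + d_{sj}, where d denotes minimum walk weight in G. -/
/-- `l` is a walk in edge set `E`: a nonempty list of vertices with consecutive edges. -/
def IsWalk {V : Type*} (E : Set (V × V)) (l : List V) : Prop :=
  l ≠ [] ∧ l.Chain' (fun a b => (a, b) ∈ E)

/-- The weight of a walk: sum of edge weights along consecutive pairs (with multiplicity). -/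
def walkWeight {V : Type*} (c : V → V → ℝ) (l : List V) : ℝ :=
  ((l.zip l.tail).map fun p => c p.1 p.2).sum

/-- `l` is a walk from `u` to `v`. -/
def IsWalkFrom {V : Type*} (E : Set (V × V)) (u v : V) (l : List V) : Prop :=
  IsWalk E l ∧ l.head? = some u ∧ l.getLast? = some v

/-- A closed walk: a walk with at least one edge whose first and last vertices agree. -/
def IsClosedWalk {V : Type*} (E : Set (V × V)) (l : List V) : Prop :=
  IsWalk E l ∧ 2 ≤ l.length ∧ l.head? = l.getLast?

/-- A simple path from `u` to `v`: a walk with all traversed vertices distinct. -/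
def IsPathFrom {V : Type*} (E : Set (V × V)) (u v : V) (l : List V) : Prop :=
  IsWalkFrom E u v l ∧ l.Nodup

/-- A cycle: a closed walk all of whose vertices other than the repeated endpoint are distinct. -/
def IsCycle {V : Type*} (E : Set (V × V)) (l : List V) : Prop :=
  IsClosedWalk E l ∧ l.tail.Nodup

/-- `x` satisfies the precedence relation system of `(V, E, c)`. -/
def Satisfies {V : Type*} (E : Set (V × V)) (c : V → V → ℝ) (x : V → ℝ) : Prop :=
  ∀ e ∈ E, x e.1 - x e.2 ≤ c e.1 e.2

/-- `R` is a redundant edge set of `(V, E, c)`: every edge of `R` has a replacement path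
in the reduced graph of no greater weight. -/
def IsRedundantEdgeSet {V : Type*} (E : Set (V × V)) (c : V → V → ℝ)
    (R : Set (V × V)) : Prop :=
  R ⊆ E ∧ ∀ e ∈ R, ∃ l, IsPathFrom (E \ R) e.1 e.2 l ∧ walkWeight c l ≤ c e.1 e.2

/-- `w` is the minimum weight of a walk from `i` to `j` in `(V, E, c)` (attained). -/
def IsMinWalkWeight {V : Type*} (E : Set (V × V)) (c : V → V → ℝ) (i j : V) (w : ℝ) : Prop :=
  (∃ l, IsWalkFrom E i j l ∧ walkWeight c l = w) ∧
  ∀ l, IsWalkFrom E i j l → w ≤ walkWeight c l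

/-- The relation `∼`: `i ∼ j` iff `i = j` or some zero-weight closed walk traverses both. -/
def Sim {V : Type*} (E : Set (V × V)) (c : V → V → ℝ) (i j : V) : Prop :=
  i = j ∨ ∃ l, IsClosedWalk E l ∧ walkWeight c l = 0 ∧ i ∈ l ∧ j ∈ l

/-! The inequality `d i j ≤ d i s + d s j` comes from concatenating walks. Conversely, `i ∼ s`
yields walks `p : i → s` and `q : s → i` of total weight zero; since `q` followed by a minimum
walk `i → j` is a walk `s → j`, `d i s + d s j ≤ w p + (w q + d i j) = d i j`. -/

section Walks

variable {V : Type*} {E : Set (V × V)} {c : V → V → ℝ}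

theorem isWalk_iff_isChain {l : List V} :
    IsWalk E l ↔ l ≠ [] ∧ l.IsChain (fun a b => (a, b) ∈ E) :=
  Iff.rfl

theorem walkWeight_append_cons (a : List V) (x : V) (b : List V) :
    walkWeight c (a ++ x :: b) = walkWeight c (a ++ [x]) + walkWeight c (x :: b) := by
  induction a with
  | nil => simp [walkWeight]
  | cons y a ih =>
    cases a with
    | nil => simp [walkWeight]
    | cons z a => simp_all [walkWeight]; ring

theorem IsWalkFrom.append_cons_iff {u v x : V} {a b : List V} :
    IsWalkFrom E u v (a ++ x :: b) ↔ IsWalkFrom E u x (a ++ [x]) ∧ IsWalkFrom E x v (x :: b) := by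
  rw [IsWalkFrom, isWalk_iff_isChain, List.isChain_split]
  simp [IsWalkFrom, isWalk_iff_isChain, List.head?_append, List.getLast?_append, and_assoc,
    and_left_comm]

theorem IsWalkFrom.trans {u v w : V} {l₁ l₂ : List V} (h₁ : IsWalkFrom E u v l₁)
    (h₂ : IsWalkFrom E v w l₂) :
    ∃ l, IsWalkFrom E u w l ∧ walkWeight c l = walkWeight c l₁ + walkWeight c l₂ := by
  obtain ⟨a, rfl⟩ := List.getLast?_eq_some_iff.mp h₁.2.2
  obtain ⟨b, rfl⟩ := List.head?_eq_some_iff.mp h₂.2.1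
  exact ⟨a ++ v :: b, append_cons_iff.mpr ⟨h₁, h₂⟩, walkWeight_append_cons a v b⟩

theorem IsWalkFrom.exists_split {u v x : V} {l : List V} (h : IsWalkFrom E u v l) (hx : x ∈ l) :
    ∃ l₁ l₂, IsWalkFrom E u x l₁ ∧ IsWalkFrom E x v l₂ ∧
      walkWeight c l₁ + walkWeight c l₂ = walkWeight c l ∧ ∀ y ∈ l, y ∈ l₁ ∨ y ∈ l₂ := by
  obtain ⟨a, b, rfl⟩ := List.append_of_mem hx
  obtain ⟨h₁, h₂⟩ := append_cons_iff.mp h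
  exact ⟨_, _, h₁, h₂, (walkWeight_append_cons a x b).symm,
    fun y hy => by simpa [or_assoc] using hy⟩

theorem IsClosedWalk.exists_isWalkFrom {l : List V} (h : IsClosedWalk E l) :
    ∃ u, IsWalkFrom E u u l := by
  obtain ⟨hwalk, -, hcl⟩ := h
  obtain ⟨u, t, rfl⟩ := List.exists_cons_of_ne_nil hwalk.1
  exact ⟨u, hwalk, rfl, hcl ▸ rfl⟩

theorem Sim.exists_round_trip {i s : V} (h : Sim E c i s) :
    ∃ p q, IsWalkFrom E i s p ∧ IsWalkFrom E s i q ∧ walkWeight c p + walkWeight c q = 0 := by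
  rcases h with rfl | ⟨l, hl, hw, hi, hs⟩
  · have hi : IsWalkFrom E i i [i] := ⟨⟨by simp, List.isChain_singleton _⟩, rfl, rfl⟩
    exact ⟨_, _, hi, hi, by simp [walkWeight]⟩
  obtain ⟨u, hu⟩ := hl.exists_isWalkFrom
  obtain ⟨l₁, l₂, hl₁, hl₂, hw₁₂, hmem⟩ := hu.exists_split (c := c) hi
  rcases hmem s hs with hs₁ | hs₂
  · obtain ⟨a, b, ha, hb, hwab, -⟩ := hl₁.exists_split (c := c) hs₁
    obtain ⟨p, hp, hwp⟩ := hl₂.trans (c := c) ha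
    exact ⟨p, b, hp, hb, by linarith⟩
  · obtain ⟨a, b, ha, hb, hwab, -⟩ := hl₂.exists_split (c := c) hs₂
    obtain ⟨q, hq, hwq⟩ := hb.trans (c := c) hl₁
    exact ⟨a, q, ha, hq, by linarith⟩

end Walks

namespace IsMinWalkWeight

variable {V : Type*} {E : Set (V × V)} {c : V → V → ℝ} {i j s : V} {dij dis dsj : ℝ}

theorem le_add (hij : IsMinWalkWeight E c i j dij) (his : IsMinWalkWeight E c i s dis)
    (hsj : IsMinWalkWeight E c s j dsj) : dij ≤ dis + dsj := by
  obtain ⟨⟨lis, hlis, rfl⟩, -⟩ := his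
  obtain ⟨⟨lsj, hlsj, rfl⟩, -⟩ := hsj
  obtain ⟨l, hl, hw⟩ := hlis.trans hlsj
  exact hw ▸ hij.2 l hl

theorem add_le_of_sim (hsim : Sim E c i s) (hij : IsMinWalkWeight E c i j dij)
    (his : IsMinWalkWeight E c i s dis) (hsj : IsMinWalkWeight E c s j dsj) :
    dis + dsj ≤ dij := by
  obtain ⟨p, q, hp, hq, hpq⟩ := hsim.exists_round_trip
  obtain ⟨⟨lij, hlij, rfl⟩, -⟩ := hij
  obtain ⟨l, hl, hw⟩ := hq.trans (c := c) hlij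
  have hdis := his.2 p hp
  have hdsj := hsj.2 l hl
  linarith

end IsMinWalkWeight

theorem stmt12_general {V : Type*} (E : Set (V × V)) (c : V → V → ℝ)
    (i j s : V) (his : Sim E c i s)
    (dij dis dsj : ℝ)
    (hij : IsMinWalkWeight E c i j dij)
    (his' : IsMinWalkWeight E c i s dis)
    (hsj' : IsMinWalkWeight E c s j dsj) :
    dij = dis + dsj :=
  le_antisymm (hij.le_add his' hsj') (IsMinWalkWeight.add_le_of_sim his hij his' hsj')

theorem stmt12 {V : Type*} (E : Set (V × V)) (c : V → V → ℝ)
    (hnn : ∀ l : List V, IsClosedWalk E l → 0 ≤ walkWeight c l)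
    (i j s : V) (his : Sim E c i s) (hsj : Sim E c s j)
    (dij dis dsj : ℝ)
    (hij : IsMinWalkWeight E c i j dij)
    (his' : IsMinWalkWeight E c i s dis)
    (hsj' : IsMinWalkWeight E c s j dsj) :
    dij = dis + dsj :=
  stmt12_general E c i j s his dij dis dsj hij his' hsj'
end

section
/- Let G = (V,E,c) be an edge-weighted directed graph without negative-weight closed walks, and let G̃ be its condensation: nodes are representatives v_1,...,v_K of the ∼-equivalence classes, with an edge (v_i,v_j) whenever some edge of G goes from class [v_i] to class [v_j] (i ≠ j), weighted by c̃_{v_i v_j} = min over edges (u,v) from [v_i] to [v_j] of (d_{v_i u} + c_{uv} + d_{v v_j}). Then every cycle of G̃ has strictly positive weight. -/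
/-!
Each edge `(k, q)` of the condensation is realized in `G` by a walk from `vr k` to `vr q` of
weight `ct k q`: a minimal walk to the tail of a cheapest connecting edge, that edge, and a
minimal walk on from its head. Gluing these along a cycle of the condensation gives a closed walk
of `G` of the same weight, which is therefore nonnegative. If it were zero, that closed walk would
pass through the representatives of two consecutive, distinct classes, making them `∼`-equivalent.
-/

section Walks

variable {V : Type*} {E : Set (V × V)}

lemma walkWeight_cons_cons (c : V → V → ℝ) (a b : V) (l : List V) :
    walkWeight c (a :: b :: l) = c a b + walkWeight c (b :: l) := by
  simp [walkWeight]

lemma walkWeight_cons_append_cons (c : V → V → ℝ) (v : V) (zs : List V) :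
    ∀ (x : V) (ys : List V),
      walkWeight c (x :: ys ++ v :: zs) = walkWeight c (x :: ys ++ [v]) + walkWeight c (v :: zs)
  | x, [] => by simp [walkWeight]
  | x, y :: ys => by
    have ih := walkWeight_cons_append_cons c v zs y ys
    simp only [List.cons_append] at ih ⊢
    rw [walkWeight_cons_cons, ih, walkWeight_cons_cons]
    ring

lemma walkWeight_append_tail (c : V → V → ℝ) {l₁ l₂ : List V} {v : V}
    (h₁ : l₁.getLast? = some v) (h₂ : l₂.head? = some v) :
    walkWeight c (l₁ ++ l₂.tail) = walkWeight c l₁ + walkWeight c l₂ := by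
  obtain ⟨ys, rfl⟩ := List.getLast?_eq_some_iff.mp h₁
  obtain ⟨zs, rfl⟩ := List.head?_eq_some_iff.mp h₂
  cases ys with
  | nil => simp [walkWeight]
  | cons x ys => simpa using walkWeight_cons_append_cons c v zs x ys

lemma isWalkFrom_cons_cons_iff {u w a b : V} {l : List V} :
    IsWalkFrom E u w (a :: b :: l) ↔ a = u ∧ (a, b) ∈ E ∧ IsWalkFrom E b w (b :: l) := by
  constructor
  · rintro ⟨⟨-, hc⟩, hu, hw⟩
    obtain ⟨hab, hc⟩ := List.isChain_cons_cons.mp hc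
    exact ⟨Option.some.inj hu, hab, ⟨List.cons_ne_nil b l, hc⟩, rfl, hw⟩
  · rintro ⟨rfl, hab, ⟨-, hc⟩, -, hw⟩
    exact ⟨⟨List.cons_ne_nil a _, List.isChain_cons_cons.mpr ⟨hab, hc⟩⟩, rfl, hw⟩

lemma IsWalkFrom.start_mem {u v : V} {l : List V} (h : IsWalkFrom E u v l) : u ∈ l :=
  List.mem_of_mem_head? h.2.1

lemma IsWalkFrom.end_mem {u v : V} {l : List V} (h : IsWalkFrom E u v l) : v ∈ l :=
  List.mem_of_mem_getLast? h.2.2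

lemma IsWalkFrom.isClosedWalk {v : V} {l : List V} (h : IsWalkFrom E v v l)
    (hlen : 2 ≤ l.length) : IsClosedWalk E l :=
  ⟨h.1, hlen, h.2.1.trans h.2.2.symm⟩

lemma IsWalkFrom.append_tail {u v w : V} {l₁ l₂ : List V}
    (h₁ : IsWalkFrom E u v l₁) (h₂ : IsWalkFrom E v w l₂) :
    IsWalkFrom E u w (l₁ ++ l₂.tail) := by
  obtain ⟨⟨-, hc₁⟩, hu, hv⟩ := h₁
  obtain ⟨⟨-, hc₂⟩, hv', hw⟩ := h₂
  obtain ⟨ys, rfl⟩ := List.getLast?_eq_some_iff.mp hv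
  obtain ⟨zs, rfl⟩ := List.head?_eq_some_iff.mp hv'
  refine ⟨⟨by simp, hc₁.append_overlap hc₂ (List.cons_ne_nil v [])⟩, ?_, ?_⟩
  · rw [List.head?_append, hu]
    rfl
  · simpa [List.getLast?_append] using hw

lemma exists_walkFrom_via_edge {c : V → V → ℝ} {i u v j : V} {la lb : List V}
    (ha : IsWalkFrom E i u la) (huv : (u, v) ∈ E) (hb : IsWalkFrom E v j lb) :
    ∃ W, IsWalkFrom E i j W ∧ walkWeight c W = walkWeight c la + c u v + walkWeight c lb ∧
      2 ≤ W.length := by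
  have he : IsWalkFrom E u v [u, v] := ⟨⟨by simp, List.isChain_pair.mpr huv⟩, rfl, rfl⟩
  have hav := ha.append_tail he
  refine ⟨_, hav.append_tail hb, ?_, ?_⟩
  · rw [walkWeight_append_tail c hav.2.2 hb.2.1, walkWeight_append_tail c ha.2.2 he.2.1]
    simp [walkWeight]
  · have := List.length_pos_of_ne_nil ha.1.1
    simp
    omega

lemma IsWalkFrom.exists_lift {ι : Type*} {Et : Set (ι × ι)} {c : V → V → ℝ} {ct : ι → ι → ℝ}
    {f : ι → V}
    (hlift : ∀ k q, (k, q) ∈ Et →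
      ∃ W, IsWalkFrom E (f k) (f q) W ∧ walkWeight c W = ct k q) :
    ∀ {l : List ι} {k q : ι}, IsWalkFrom Et k q l →
      ∃ W, IsWalkFrom E (f k) (f q) W ∧ walkWeight c W = walkWeight ct l
  | [], _, _, h => absurd rfl h.1.1
  | [x], k, q, ⟨_, hk, hq⟩ => by
    obtain ⟨rfl, rfl⟩ : x = k ∧ x = q := by simpa using And.intro hk hq
    exact ⟨[f x], ⟨⟨by simp, List.isChain_singleton _⟩, rfl, rfl⟩, by simp [walkWeight]⟩
  | x :: y :: t, k, q, h => by
    obtain ⟨rfl, hxy, hrest⟩ := isWalkFrom_cons_cons_iff.mp h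
    obtain ⟨W₁, hW₁, hw₁⟩ := hlift x y hxy
    obtain ⟨W₂, hW₂, hw₂⟩ := IsWalkFrom.exists_lift hlift hrest
    refine ⟨_, hW₁.append_tail hW₂, ?_⟩
    rw [walkWeight_append_tail c hW₁.2.2 hW₂.2.1, hw₁, hw₂, walkWeight_cons_cons]

end Walks

theorem stmt14 {V : Type*} {ι : Type*} (E : Set (V × V)) (c : V → V → ℝ)
    (hnn : ∀ l : List V, IsClosedWalk E l → 0 ≤ walkWeight c l)
    (vr : ι → V)
    (hrep : ∀ x : V, ∃! k : ι, Sim E c x (vr k))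
    (Et : Set (ι × ι))
    (hEt : ∀ p : ι × ι, p ∈ Et ↔ p.1 ≠ p.2 ∧
      ∃ u v : V, (u, v) ∈ E ∧ Sim E c u (vr p.1) ∧ Sim E c v (vr p.2))
    (ct : ι → ι → ℝ)
    (hct : ∀ k q : ι, (k, q) ∈ Et →
      IsLeast { w : ℝ | ∃ u v : V, (u, v) ∈ E ∧ Sim E c u (vr k) ∧ Sim E c v (vr q) ∧
        ∃ a b : ℝ, IsMinWalkWeight E c (vr k) u a ∧ IsMinWalkWeight E c v (vr q) b ∧
          w = a + c u v + b } (ct k q)) :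
    ∀ l : List ι, IsCycle Et l → 0 < walkWeight ct l := by
  have hlift : ∀ k q, (k, q) ∈ Et →
      ∃ W, IsWalkFrom E (vr k) (vr q) W ∧ walkWeight c W = ct k q ∧ 2 ≤ W.length := by
    intro k q hkq
    obtain ⟨u, v, huv, -, -, -, -, ⟨⟨la, hla, rfl⟩, -⟩, ⟨⟨lb, hlb, rfl⟩, -⟩, hw⟩ :=
      (hct k q hkq).1
    exact hw ▸ exists_walkFrom_via_edge hla huv hlb
  rintro (_ | ⟨k₀, _ | ⟨k₁, rest⟩⟩) ⟨⟨hwalk, hlen, hclosed⟩, -⟩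
  iterate 2 simp at hlen
  obtain ⟨-, hedge, hrest⟩ := isWalkFrom_cons_cons_iff.mp ⟨hwalk, rfl, hclosed.symm⟩
  obtain ⟨W₁, hW₁, hw₁, hlen₁⟩ := hlift k₀ k₁ hedge
  obtain ⟨W₂, hW₂, hw₂⟩ :=
    hrest.exists_lift fun k q hkq => (hlift k q hkq).imp fun _ h => ⟨h.1, h.2.1⟩
  have hW := hW₁.append_tail hW₂
  have hclosedW : IsClosedWalk E (W₁ ++ W₂.tail) :=
    hW.isClosedWalk (hlen₁.trans (by simp))
  have hweight : walkWeight c (W₁ ++ W₂.tail) = walkWeight ct (k₀ :: k₁ :: rest) := by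
    rw [walkWeight_append_tail c hW₁.2.2 hW₂.2.1, hw₁, hw₂, walkWeight_cons_cons]
  refine lt_of_le_of_ne (hweight ▸ hnn _ hclosedW) fun hzero => ((hEt _).mp hedge).1 ?_
  have hsim : Sim E c (vr k₀) (vr k₁) :=
    Or.inr ⟨_, hclosedW, hweight.trans hzero.symm, hW.start_mem,
      List.mem_append_left _ hW₁.end_mem⟩
  exact (hrep (vr k₀)).unique (Or.inl rfl) hsim
end
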